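/- Let α ∈ (−1,0), let K₀ : ℝ² → ℝ be a smooth function supported in the parabolic ball B_𝔰(0,1), and set K := Σ_{n≥0} K_n where K_n(t,x) := 2^n K₀(2^{2n} t, 2^n x). Then for every compact set 𝔎 ⊂ ℝ² there exists a constant C (depending only on α, K₀ and 𝔎) such that for every continuous compactly supported function ζ : ℝ² → ℝ and all x, y ∈ 𝔎 with ‖x−y‖_𝔰 ≤ 1, one has |(K∗ζ)(x) − (K∗ζ)(y)| ≤ C ‖x−y‖_𝔰 · ‖ζ‖_{α; rect(𝔎)}, where rect(𝔎) is the smallest closed rectangle [a,b]×[c,d] containing 𝔎. -/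

import Mathlib

noncomputable section

open MeasureTheory

/-- The parabolic norm on `ℝ²`: `‖z‖_𝔰 = (|z₁| + |z₂|²)^(1/2)`. -/
def pnorm (z : ℝ × ℝ) : ℝ := (|z.1| + |z.2| ^ 2) ^ ((1:ℝ)/2)

/-- The closed parabolic ball centered at `x` with radius `r`. -/
def pball (x : ℝ × ℝ) (r : ℝ) : Set (ℝ × ℝ) := {y | pnorm (y - x) ≤ r}

/-- Partial derivative in the first (time) variable. -/
def pd1 (f : ℝ × ℝ → ℝ) (p : ℝ × ℝ) : ℝ := deriv (fun t => f (t, p.2)) p.1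

/-- Partial derivative in the second (space) variable. -/
def pd2 (f : ℝ × ℝ → ℝ) (p : ℝ × ℝ) : ℝ := deriv (fun x => f (p.1, x)) p.2

/-- Supremum norm of a function on `ℝ²`. -/
def supnorm (f : ℝ × ℝ → ℝ) : ℝ := ⨆ p : ℝ × ℝ, |f p|

/-- The parabolic `C²` norm: sum of sup-norms of `∂^k φ` over multi-indices `k = (k₁,k₂)`
with `2k₁ + k₂ ≤ 2`, i.e. `k ∈ {(0,0), (0,1), (0,2), (1,0)}`. -/
def C2norm (φ : ℝ × ℝ → ℝ) : ℝ :=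
  supnorm φ + supnorm (pd2 φ) + supnorm (pd2 (pd2 φ)) + supnorm (pd1 φ)

/-- The pairing `⟨ζ, S^δ_{𝔰,x} φ⟩` of `ζ` with the parabolic rescaling of `φ` at `x`. -/
def BHpair (ζ : ℝ × ℝ → ℝ) (x : ℝ × ℝ) (δ : ℝ) (φ : ℝ × ℝ → ℝ) : ℝ :=
  ∫ y : ℝ × ℝ, ζ y * (δ ^ (3:ℕ))⁻¹ * φ ((δ ^ (2:ℕ))⁻¹ * (y.1 - x.1), δ⁻¹ * (y.2 - x.2))

/-- `D` is an upper bound for the Besov–Hairer `α`-norm of `ζ` over the set `𝔎`: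
for every base point `x ∈ 𝔎`, scale `δ ∈ (0,1]` and `C²` test function `φ`
supported in the parabolic unit ball with `‖φ‖_{C²} ≤ 1`, the rescaled pairing is
bounded by `D · δ^α`.  (`‖ζ‖_{α;𝔎} ≤ D` for the least such `D`.) -/
def IsBHBound (α : ℝ) (ζ : ℝ × ℝ → ℝ) (𝔎 : Set (ℝ × ℝ)) (D : ℝ) : Prop :=
  ∀ x ∈ 𝔎, ∀ δ : ℝ, δ ∈ Set.Ioc (0:ℝ) 1 →
    ∀ φ : ℝ × ℝ → ℝ, ContDiff ℝ 2 φ → Function.support φ ⊆ pball 0 1 → C2norm φ ≤ 1 →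
      |BHpair ζ x δ φ| ≤ D * δ ^ α

/-- The kernel `K = Σ_{n ≥ 0} K_n` with `K_n(t,x) = 2^n K₀(2^{2n} t, 2^n x)`. -/
def Kfun (K₀ : ℝ × ℝ → ℝ) : ℝ × ℝ → ℝ := fun p =>
  ∑' n : ℕ, (2:ℝ) ^ n * K₀ ((2:ℝ) ^ (2*n) * p.1, (2:ℝ) ^ n * p.2)

/-- Convolution of two functions on `ℝ²`. -/
def convol (f g : ℝ × ℝ → ℝ) (x : ℝ × ℝ) : ℝ := ∫ y : ℝ × ℝ, f (x - y) * g y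

/-- The smallest closed rectangle `[a,b] × [c,d]` containing `𝔎`. -/
def rect (𝔎 : Set (ℝ × ℝ)) : Set (ℝ × ℝ) :=
  Set.Icc (sInf (Prod.fst '' 𝔎)) (sSup (Prod.fst '' 𝔎)) ×ˢ
    Set.Icc (sInf (Prod.snd '' 𝔎)) (sSup (Prod.snd '' 𝔎))

namespace S6

lemma pnorm_eq_sqrt (z : ℝ × ℝ) : pnorm z = Real.sqrt (|z.1| + |z.2|^2) := by
  rw [pnorm, Real.sqrt_eq_rpow]

lemma pnorm_nonneg (z : ℝ × ℝ) : 0 ≤ pnorm z := by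
  rw [pnorm_eq_sqrt]; exact Real.sqrt_nonneg _

lemma continuous_pnorm : Continuous pnorm := by
  simp only [funext pnorm_eq_sqrt]
  exact Real.continuous_sqrt.comp
    (((continuous_fst.abs).add ((continuous_snd.abs).pow 2)))

lemma isClosed_pball (x : ℝ × ℝ) (r : ℝ) : IsClosed (pball x r) := by
  have : pball x r = (fun y => pnorm (y - x)) ⁻¹' Set.Iic r := rfl
  rw [this]
  exact IsClosed.preimage (continuous_pnorm.comp (continuous_id.sub continuous_const)) isClosed_Iic

lemma pnorm_neg (z : ℝ × ℝ) : pnorm (-z) = pnorm z := by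
  simp [pnorm]

lemma sq_pnorm (z : ℝ × ℝ) : pnorm z ^ 2 = |z.1| + |z.2|^2 := by
  rw [pnorm_eq_sqrt, Real.sq_sqrt (by positivity)]

lemma abs_fst_le (z : ℝ × ℝ) : |z.1| ≤ pnorm z ^ 2 := by
  rw [sq_pnorm]; nlinarith [sq_nonneg (|z.2|)]

lemma abs_snd_le (z : ℝ × ℝ) : |z.2| ≤ pnorm z := by
  have h := sq_pnorm z
  have h2 : |z.2|^2 ≤ pnorm z ^ 2 := by nlinarith [abs_nonneg z.1]
  have := abs_le_abs (a := |z.2|) (b := pnorm z)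
  nlinarith [abs_nonneg z.2, pnorm_nonneg z]

lemma eq_of_pnorm_sub_eq_zero {x y : ℝ × ℝ} (h : pnorm (x - y) = 0) : x = y := by
  have h1 := sq_pnorm (x - y)
  rw [h] at h1
  have h2 : |(x-y).1| = 0 ∧ |(x-y).2| = 0 := by
    constructor <;> nlinarith [abs_nonneg (x-y).1, abs_nonneg (x-y).2, sq_nonneg (|(x-y).2|)]
  have e1 : x.1 = y.1 := by have := abs_eq_zero.1 h2.1; simpa [sub_eq_zero] using this
  have e2 : x.2 = y.2 := by have := abs_eq_zero.1 h2.2; simpa [sub_eq_zero] using this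
  exact Prod.ext e1 e2

lemma mem_pball_of_bounds {z : ℝ × ℝ} (h : pnorm z ≤ 1) : |z.1| ≤ 1 ∧ |z.2| ≤ 1 := by
  constructor
  · have := abs_fst_le z; nlinarith [pnorm_nonneg z]
  · exact (abs_snd_le z).trans h

/-- slices have derivatives given by pd1 -/
lemma hasDerivAt_slice1 {F : ℝ × ℝ → ℝ} (hF : Differentiable ℝ F) (q w : ℝ) :
    HasDerivAt (fun t => F (t, w)) (pd1 F (q, w)) q := by
  have h1 : HasDerivAt (fun t : ℝ => ((t, w) : ℝ × ℝ)) ((1:ℝ), (0:ℝ)) q :=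
    (hasDerivAt_id q).prodMk (hasDerivAt_const q w)
  have h2 := (hF ((q, w) : ℝ × ℝ)).hasFDerivAt.comp_hasDerivAt q h1
  have h3 : pd1 F (q, w) = fderiv ℝ F (q, w) (1, 0) := by
    rw [pd1]; exact h2.deriv
  rw [h3]; exact h2

lemma hasDerivAt_slice2 {F : ℝ × ℝ → ℝ} (hF : Differentiable ℝ F) (w q : ℝ) :
    HasDerivAt (fun v => F (w, v)) (pd2 F (w, q)) q := by
  have h1 : HasDerivAt (fun v : ℝ => ((w, v) : ℝ × ℝ)) ((0:ℝ), (1:ℝ)) q :=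
    (hasDerivAt_const q w).prodMk (hasDerivAt_id q)
  have h2 := (hF ((w, q) : ℝ × ℝ)).hasFDerivAt.comp_hasDerivAt q h1
  have h3 : pd2 F (w, q) = fderiv ℝ F (w, q) (0, 1) := by
    rw [pd2]; exact h2.deriv
  rw [h3]; exact h2

lemma pd1_eq_fderiv {F : ℝ × ℝ → ℝ} (hF : Differentiable ℝ F) (p : ℝ × ℝ) :
    pd1 F p = fderiv ℝ F p (1, 0) := by
  have h1 : HasDerivAt (fun t : ℝ => ((t, p.2) : ℝ × ℝ)) ((1:ℝ), (0:ℝ)) p.1 :=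
    (hasDerivAt_id p.1).prodMk (hasDerivAt_const p.1 p.2)
  have h2 := (hF p).hasFDerivAt.comp_hasDerivAt p.1 h1
  rw [pd1]; exact h2.deriv

lemma pd2_eq_fderiv {F : ℝ × ℝ → ℝ} (hF : Differentiable ℝ F) (p : ℝ × ℝ) :
    pd2 F p = fderiv ℝ F p (0, 1) := by
  have h1 : HasDerivAt (fun v : ℝ => ((p.1, v) : ℝ × ℝ)) ((0:ℝ), (1:ℝ)) p.2 :=
    (hasDerivAt_const p.2 p.1).prodMk (hasDerivAt_id p.2)
  have h2 := (hF p).hasFDerivAt.comp_hasDerivAt p.2 h1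
  rw [pd2]; exact h2.deriv

lemma fderiv_apply_eq {F : ℝ × ℝ → ℝ} (hF : Differentiable ℝ F) (p : ℝ × ℝ) (c d : ℝ) :
    fderiv ℝ F p (c, d) = c * pd1 F p + d * pd2 F p := by
  have h : ((c, d) : ℝ × ℝ) = c • ((1:ℝ), (0:ℝ)) + d • ((0:ℝ), (1:ℝ)) := by
    simp [Prod.ext_iff]
  rw [h, map_add, _root_.map_smul, _root_.map_smul, pd1_eq_fderiv hF, pd2_eq_fderiv hF,
    smul_eq_mul, smul_eq_mul]

lemma contDiff_pd1 {F : ℝ × ℝ → ℝ} (hF : ContDiff ℝ (⊤ : ℕ∞) F) : ContDiff ℝ (⊤ : ℕ∞) (pd1 F) := by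
  have h : ContDiff ℝ (⊤ : ℕ∞) (fderiv ℝ F) := hF.fderiv_right (by simp)
  have h2 : ContDiff ℝ (⊤ : ℕ∞) (fun p : ℝ × ℝ => fderiv ℝ F p ((1:ℝ), (0:ℝ))) :=
    h.clm_apply contDiff_const
  have h3 : pd1 F = fun p : ℝ × ℝ => fderiv ℝ F p ((1:ℝ), (0:ℝ)) :=
    funext fun p => pd1_eq_fderiv (hF.differentiable (by simp)) p
  rw [h3]; exact h2

lemma contDiff_pd2 {F : ℝ × ℝ → ℝ} (hF : ContDiff ℝ (⊤ : ℕ∞) F) : ContDiff ℝ (⊤ : ℕ∞) (pd2 F) := by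
  have h : ContDiff ℝ (⊤ : ℕ∞) (fderiv ℝ F) := hF.fderiv_right (by simp)
  have h2 : ContDiff ℝ (⊤ : ℕ∞) (fun p : ℝ × ℝ => fderiv ℝ F p ((0:ℝ), (1:ℝ))) :=
    h.clm_apply contDiff_const
  have h3 : pd2 F = fun p : ℝ × ℝ => fderiv ℝ F p ((0:ℝ), (1:ℝ)) :=
    funext fun p => pd2_eq_fderiv (hF.differentiable (by simp)) p
  rw [h3]; exact h2

lemma support_pd1_subset {F : ℝ × ℝ → ℝ} (hF : Differentiable ℝ F) :
    Function.support (pd1 F) ⊆ tsupport F := by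
  intro p hp
  by_contra h
  apply hp
  have hz : fderiv ℝ F p = 0 := by
    by_contra h2
    exact h (support_fderiv_subset ℝ h2)
  rw [pd1_eq_fderiv hF, hz]; rfl

lemma support_pd2_subset {F : ℝ × ℝ → ℝ} (hF : Differentiable ℝ F) :
    Function.support (pd2 F) ⊆ tsupport F := by
  intro p hp
  by_contra h
  apply hp
  have hz : fderiv ℝ F p = 0 := by
    by_contra h2
    exact h (support_fderiv_subset ℝ h2)
  rw [pd2_eq_fderiv hF, hz]; rfl

end S6

namespace S6

/-- master shape of all our test functions -/
def shp (F₁ F₂ : ℝ × ℝ → ℝ) (c₁ c₂ : ℝ) : ℝ × ℝ → ℝ :=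
  fun u => c₁ * F₁ (-u.1, -u.2) + c₂ * F₂ (-u.1, -u.2)

lemma contDiff_shp {F₁ F₂ : ℝ × ℝ → ℝ} (h₁ : ContDiff ℝ (⊤ : ℕ∞) F₁) (h₂ : ContDiff ℝ (⊤ : ℕ∞) F₂)
    (c₁ c₂ : ℝ) : ContDiff ℝ (⊤ : ℕ∞) (shp F₁ F₂ c₁ c₂) := by
  have hneg : ContDiff ℝ (⊤ : ℕ∞) (fun u : ℝ × ℝ => ((-u.1, -u.2) : ℝ × ℝ)) :=
    (contDiff_fst.neg).prodMk (contDiff_snd.neg)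
  exact (contDiff_const.mul (h₁.comp hneg)).add (contDiff_const.mul (h₂.comp hneg))

lemma pd1_shp {F₁ F₂ : ℝ × ℝ → ℝ} (h₁ : Differentiable ℝ F₁) (h₂ : Differentiable ℝ F₂)
    (c₁ c₂ : ℝ) (u : ℝ × ℝ) :
    pd1 (shp F₁ F₂ c₁ c₂) u
      = c₁ * (pd1 F₁ (-u.1, -u.2) * (-1)) + c₂ * (pd1 F₂ (-u.1, -u.2) * (-1)) := by
  have hn : HasDerivAt (fun t : ℝ => -t) (-1 : ℝ) u.1 := hasDerivAt_neg u.1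
  have d1 : HasDerivAt (fun t : ℝ => F₁ (-t, -u.2)) (pd1 F₁ (-u.1, -u.2) * (-1)) u.1 :=
    (hasDerivAt_slice1 h₁ (-u.1) (-u.2)).comp u.1 hn
  have d2 : HasDerivAt (fun t : ℝ => F₂ (-t, -u.2)) (pd1 F₂ (-u.1, -u.2) * (-1)) u.1 :=
    (hasDerivAt_slice1 h₂ (-u.1) (-u.2)).comp u.1 hn
  have := ((d1.const_mul c₁).add (d2.const_mul c₂)).deriv
  rw [pd1]
  exact this

lemma pd2_shp {F₁ F₂ : ℝ × ℝ → ℝ} (h₁ : Differentiable ℝ F₁) (h₂ : Differentiable ℝ F₂)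
    (c₁ c₂ : ℝ) (u : ℝ × ℝ) :
    pd2 (shp F₁ F₂ c₁ c₂) u
      = c₂ * (pd2 F₂ (-u.1, -u.2) * (-1)) + c₁ * (pd2 F₁ (-u.1, -u.2) * (-1)) := by
  have hn : HasDerivAt (fun t : ℝ => -t) (-1 : ℝ) u.2 := hasDerivAt_neg u.2
  have d1 : HasDerivAt (fun v : ℝ => F₁ (-u.1, -v)) (pd2 F₁ (-u.1, -u.2) * (-1)) u.2 :=
    (hasDerivAt_slice2 h₁ (-u.1) (-u.2)).comp u.2 hn
  have d2 : HasDerivAt (fun v : ℝ => F₂ (-u.1, -v)) (pd2 F₂ (-u.1, -u.2) * (-1)) u.2 :=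
    (hasDerivAt_slice2 h₂ (-u.1) (-u.2)).comp u.2 hn
  have h := ((d1.const_mul c₁).add (d2.const_mul c₂)).deriv
  rw [pd2]
  rw [show (fun v => shp F₁ F₂ c₁ c₂ (u.1, v))
      = fun v : ℝ => c₁ * F₁ (-u.1, -v) + c₂ * F₂ (-u.1, -v) from rfl,
      show (fun v : ℝ => c₁ * F₁ (-u.1, -v) + c₂ * F₂ (-u.1, -v))
        = ((fun y => c₁ * F₁ (-u.1, -y)) + fun y => c₂ * F₂ (-u.1, -y)) from rfl, h]
  ring

/-- as functions, pd2 of a shape is again a shape -/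
lemma pd2_shp_eq {F₁ F₂ : ℝ × ℝ → ℝ} (h₁ : Differentiable ℝ F₁) (h₂ : Differentiable ℝ F₂)
    (c₁ c₂ : ℝ) :
    pd2 (shp F₁ F₂ c₁ c₂) = shp (pd2 F₁) (pd2 F₂) (-c₁) (-c₂) := by
  funext u
  rw [pd2_shp h₁ h₂, shp]
  ring

lemma supnorm_le {f : ℝ × ℝ → ℝ} {M : ℝ} (hM : 0 ≤ M) (h : ∀ p, |f p| ≤ M) :
    supnorm f ≤ M := Real.iSup_le h hM

lemma shp_abs_le {F₁ F₂ : ℝ × ℝ → ℝ} {M : ℝ} (hM : 0 ≤ M)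
    (hb₁ : ∀ p, |F₁ p| ≤ M) (hb₂ : ∀ p, |F₂ p| ≤ M) (c₁ c₂ : ℝ) (u : ℝ × ℝ) :
    |shp F₁ F₂ c₁ c₂ u| ≤ (|c₁| + |c₂|) * M := by
  rw [shp]
  calc |c₁ * F₁ (-u.1, -u.2) + c₂ * F₂ (-u.1, -u.2)|
      ≤ |c₁ * F₁ (-u.1, -u.2)| + |c₂ * F₂ (-u.1, -u.2)| := abs_add_le _ _
    _ ≤ |c₁| * M + |c₂| * M := by
        rw [abs_mul, abs_mul]
        exact add_le_add (mul_le_mul_of_nonneg_left (hb₁ _) (abs_nonneg _))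
          (mul_le_mul_of_nonneg_left (hb₂ _) (abs_nonneg _))
    _ = (|c₁| + |c₂|) * M := by ring

lemma supnorm_shp_le {F₁ F₂ : ℝ × ℝ → ℝ} {M : ℝ} (hM : 0 ≤ M)
    (hb₁ : ∀ p, |F₁ p| ≤ M) (hb₂ : ∀ p, |F₂ p| ≤ M) (c₁ c₂ : ℝ) :
    supnorm (shp F₁ F₂ c₁ c₂) ≤ (|c₁| + |c₂|) * M :=
  supnorm_le (by positivity) (shp_abs_le hM hb₁ hb₂ c₁ c₂)

/-- the C² norm bound for shape functions -/
lemma C2norm_shp_le {F₁ F₂ : ℝ × ℝ → ℝ} {M : ℝ} (hM : 0 ≤ M)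
    (h₁ : ContDiff ℝ (⊤ : ℕ∞) F₁) (h₂ : ContDiff ℝ (⊤ : ℕ∞) F₂)
    (hb₁ : ∀ p, |F₁ p| ≤ M) (hb₂ : ∀ p, |F₂ p| ≤ M)
    (hd₁ : ∀ p, |pd2 F₁ p| ≤ M) (hd₂ : ∀ p, |pd2 F₂ p| ≤ M)
    (hdd₁ : ∀ p, |pd2 (pd2 F₁) p| ≤ M) (hdd₂ : ∀ p, |pd2 (pd2 F₂) p| ≤ M)
    (ht₁ : ∀ p, |pd1 F₁ p| ≤ M) (ht₂ : ∀ p, |pd1 F₂ p| ≤ M)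
    (c₁ c₂ : ℝ) :
    C2norm (shp F₁ F₂ c₁ c₂) ≤ 4 * (|c₁| + |c₂|) * M := by
  have hd1 := h₁.differentiable (by simp)
  have hd2 := h₂.differentiable (by simp)
  have e1 := pd2_shp_eq hd1 hd2 c₁ c₂
  have e2 := pd2_shp_eq ((contDiff_pd2 h₁).differentiable (by simp))
    ((contDiff_pd2 h₂).differentiable (by simp)) (-c₁) (-c₂)
  have B : (0:ℝ) ≤ (|c₁| + |c₂|) * M := by positivity
  have s0 : supnorm (shp F₁ F₂ c₁ c₂) ≤ (|c₁| + |c₂|) * M :=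
    supnorm_shp_le hM hb₁ hb₂ c₁ c₂
  have s1 : supnorm (pd2 (shp F₁ F₂ c₁ c₂)) ≤ (|c₁| + |c₂|) * M := by
    rw [e1]
    have := supnorm_shp_le hM hd₁ hd₂ (-c₁) (-c₂)
    simpa using this
  have s2 : supnorm (pd2 (pd2 (shp F₁ F₂ c₁ c₂))) ≤ (|c₁| + |c₂|) * M := by
    rw [e1, e2]
    have := supnorm_shp_le hM hdd₁ hdd₂ (-(-c₁)) (-(-c₂))
    simpa using this
  have s3 : supnorm (pd1 (shp F₁ F₂ c₁ c₂)) ≤ (|c₁| + |c₂|) * M := by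
    apply supnorm_le B
    intro u
    rw [pd1_shp hd1 hd2]
    calc |c₁ * (pd1 F₁ (-u.1, -u.2) * (-1)) + c₂ * (pd1 F₂ (-u.1, -u.2) * (-1))|
        ≤ |c₁ * (pd1 F₁ (-u.1, -u.2) * (-1))| + |c₂ * (pd1 F₂ (-u.1, -u.2) * (-1))| :=
          abs_add_le _ _
      _ ≤ |c₁| * M + |c₂| * M := by
          rw [abs_mul, abs_mul, abs_mul, abs_mul]
          simp only [abs_neg, abs_one, mul_one]
          exact add_le_add (mul_le_mul_of_nonneg_left (ht₁ _) (abs_nonneg _))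
            (mul_le_mul_of_nonneg_left (ht₂ _) (abs_nonneg _))
      _ = (|c₁| + |c₂|) * M := by ring
  rw [C2norm]
  linarith

end S6

namespace S6

lemma support_shp_subset {F₁ F₂ : ℝ × ℝ → ℝ}
    (h₁ : tsupport F₁ ⊆ pball 0 1) (h₂ : tsupport F₂ ⊆ pball 0 1) (c₁ c₂ : ℝ) :
    Function.support (shp F₁ F₂ c₁ c₂) ⊆ pball 0 1 := by
  intro u hu
  have hor : F₁ (-u.1, -u.2) ≠ 0 ∨ F₂ (-u.1, -u.2) ≠ 0 := by
    by_contra h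
    push_neg at h
    apply hu
    show shp F₁ F₂ c₁ c₂ u = 0
    rw [shp]; rw [h.1, h.2]; ring
  have hm : ((-u.1, -u.2) : ℝ × ℝ) ∈ pball 0 1 := by
    rcases hor with h | h
    · exact h₁ (subset_tsupport _ h)
    · exact h₂ (subset_tsupport _ h)
  have hp : pnorm (((-u.1, -u.2) : ℝ × ℝ) - 0) ≤ 1 := hm
  show pnorm (u - 0) ≤ 1
  rw [sub_zero] at hp ⊢
  rw [show ((-u.1, -u.2) : ℝ × ℝ) = -u from rfl, pnorm_neg] at hp
  exact hp

lemma tsupport_pd1 {F : ℝ × ℝ → ℝ} (hF : Differentiable ℝ F) :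
    tsupport (pd1 F) ⊆ tsupport F :=
  closure_minimal (support_pd1_subset hF) isClosed_closure

lemma tsupport_pd2 {F : ℝ × ℝ → ℝ} (hF : Differentiable ℝ F) :
    tsupport (pd2 F) ⊆ tsupport F :=
  closure_minimal (support_pd2_subset hF) isClosed_closure

lemma exists_bound {f : ℝ × ℝ → ℝ} (hf : Continuous f) {K : Set (ℝ × ℝ)} (hK : IsCompact K)
    (hsupp : Function.support f ⊆ K) : ∃ M, 0 ≤ M ∧ ∀ p, |f p| ≤ M := by
  obtain ⟨C, hC⟩ := hK.exists_bound_of_continuousOn hf.continuousOn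
  refine ⟨max C 0, le_max_right _ _, fun p => ?_⟩
  by_cases hp : p ∈ K
  · have := hC p hp
    rw [Real.norm_eq_abs] at this
    exact this.trans (le_max_left _ _)
  · have : f p = 0 := by
      by_contra h
      exact hp (hsupp h)
    rw [this, abs_zero]
    exact le_max_right _ _

lemma isCompact_pball : IsCompact (pball 0 1) := by
  have hsub : pball 0 1 ⊆ Set.Icc ((-1,-1) : ℝ × ℝ) (1,1) := by
    intro z hz
    have hz' : pnorm (z - 0) ≤ 1 := hz
    rw [sub_zero] at hz'
    obtain ⟨h1, h2⟩ := mem_pball_of_bounds hz'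
    rw [abs_le] at h1 h2
    constructor <;> constructor <;> simp [h1.1, h1.2, h2.1, h2.2]
  exact isCompact_Icc.of_isClosed_subset (isClosed_pball 0 1) hsub

lemma integral_eq_mul_BHpair (ζ : ℝ × ℝ → ℝ) (w : ℝ × ℝ) {δ R : ℝ} (hδ : 0 < δ)
    (G ψ : ℝ × ℝ → ℝ)
    (hpt : ∀ u : ℝ × ℝ, δ^(3:ℕ) * G (w.1 + δ^(2:ℕ) * u.1, w.2 + δ * u.2) = R * ψ u) :
    ∫ z, ζ z * G z = R * BHpair ζ w δ ψ := by
  rw [BHpair, ← integral_const_mul]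
  congr 1
  funext z
  have hδ0 : δ ≠ 0 := hδ.ne'
  have h := hpt ((δ^(2:ℕ))⁻¹ * (z.1 - w.1), δ⁻¹ * (z.2 - w.2))
  simp only at h
  have e1 : w.1 + δ^(2:ℕ) * ((δ^(2:ℕ))⁻¹ * (z.1 - w.1)) = z.1 := by field_simp; ring
  have e2 : w.2 + δ * (δ⁻¹ * (z.2 - w.2)) = z.2 := by field_simp; ring
  rw [e1, e2, Prod.mk.eta] at h
  have : R * (ζ z * (δ^(3:ℕ))⁻¹ * ψ ((δ^(2:ℕ))⁻¹ * (z.1 - w.1), δ⁻¹ * (z.2 - w.2)))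
      = ζ z * (δ^(3:ℕ))⁻¹ * (R * ψ ((δ^(2:ℕ))⁻¹ * (z.1 - w.1), δ⁻¹ * (z.2 - w.2))) := by
    ring
  rw [this, ← h]
  field_simp

/-- D is nonnegative -/
lemma bh_nonneg {α : ℝ} {ζ : ℝ × ℝ → ℝ} {S : Set (ℝ × ℝ)} {D : ℝ}
    (hD : IsBHBound α ζ S D) {w : ℝ × ℝ} (hw : w ∈ S) : 0 ≤ D := by
  have h := hD w hw 1 ⟨one_pos, le_refl 1⟩ (fun _ => 0) contDiff_const
    (by simp [Function.support]) (by simp [C2norm, supnorm, pd1, pd2])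
  rw [Real.one_rpow] at h
  calc (0:ℝ) = |BHpair ζ w 1 (fun _ => 0)| := by simp [BHpair]
    _ ≤ D * 1 := h
    _ = D := mul_one D

end S6

def Kn (K₀ : ℝ × ℝ → ℝ) (n : ℕ) (p : ℝ × ℝ) : ℝ :=
  (2:ℝ)^n * K₀ ((2:ℝ)^(2*n) * p.1, (2:ℝ)^n * p.2)

namespace S6

lemma Kfun_apply (K₀ : ℝ × ℝ → ℝ) (p : ℝ × ℝ) : Kfun K₀ p = ∑' n, Kn K₀ n p := rfl

lemma two_pow_pos (n : ℕ) : (0:ℝ) < (2:ℝ)^n := by positivity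

lemma tn_pos (n : ℕ) : (0:ℝ) < ((2:ℝ)^n)⁻¹ := by positivity

lemma tn_le_one (n : ℕ) : ((2:ℝ)^n)⁻¹ ≤ 1 := by
  rw [inv_le_one_iff₀]
  right
  exact one_le_pow₀ (by norm_num)

lemma key1 {K₀ : ℝ × ℝ → ℝ} (hK₀ : ContDiff ℝ (⊤ : ℕ∞) K₀) (hKts : tsupport K₀ ⊆ pball 0 1)
    {M : ℝ} (hM1 : 1 ≤ M)
    (hbK : ∀ p, |K₀ p| ≤ M) (hb2 : ∀ p, |pd2 K₀ p| ≤ M)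
    (hb22 : ∀ p, |pd2 (pd2 K₀) p| ≤ M) (hb1 : ∀ p, |pd1 K₀ p| ≤ M)
    {α : ℝ} {ζ : ℝ × ℝ → ℝ} {S : Set (ℝ × ℝ)} {D : ℝ} (hD : IsBHBound α ζ S D) (hD0 : 0 ≤ D)
    (n : ℕ) {w : ℝ × ℝ} (hw : w ∈ S) :
    |∫ z, ζ z * Kn K₀ n (w - z)|
      ≤ 4 * M * D * (((2:ℝ)^n)⁻¹)^(2:ℕ) * (((2:ℝ)^n)⁻¹) ^ α := by
  set t : ℝ := ((2:ℝ)^n)⁻¹ with ht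
  have ht0 : 0 < t := tn_pos n
  have ht1 : t ≤ 1 := tn_le_one n
  have h2n : ((2:ℝ)^n) ≠ 0 := (two_pow_pos n).ne'
  have hM0 : (0:ℝ) < M := lt_of_lt_of_le one_pos hM1
  set ψ : ℝ × ℝ → ℝ := shp K₀ K₀ (4*M)⁻¹ 0 with hψ
  have hpt : ∀ u : ℝ × ℝ, t^(3:ℕ) * (Kn K₀ n (w - (w.1 + t^(2:ℕ) * u.1, w.2 + t * u.2)))
      = (4*M*t^(2:ℕ)) * ψ u := by
    intro u
    have a1 : (2:ℝ)^(2*n) * (w.1 - (w.1 + t^(2:ℕ) * u.1)) = -u.1 := by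
      rw [mul_comm 2 n, pow_mul, ht]
      field_simp
      ring
    have a2 : (2:ℝ)^n * (w.2 - (w.2 + t * u.2)) = -u.2 := by
      rw [ht]; field_simp; ring
    show t^(3:ℕ) * ((2:ℝ)^n * K₀ (_, _)) = _
    simp only [Prod.fst_sub, Prod.snd_sub]
    rw [a1, a2, hψ, shp]
    have e : (4*M) * (4*M)⁻¹ = 1 := mul_inv_cancel₀ (by positivity)
    have e2 : t^(3:ℕ) * (2:ℝ)^n = t^(2:ℕ) := by
      rw [ht]; field_simp
    linear_combination K₀ (-u.1, -u.2) * e2 - t^(2:ℕ) * K₀ (-u.1, -u.2) * e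
  have hrepr := integral_eq_mul_BHpair ζ w ht0 (fun z => Kn K₀ n (w - z)) ψ hpt
  rw [hrepr]
  have hC2 : C2norm ψ ≤ 1 := by
    have := C2norm_shp_le hM0.le hK₀ hK₀ hbK hbK hb2 hb2 hb22 hb22 hb1 hb1 (4*M)⁻¹ 0
    apply this.trans
    rw [abs_of_nonneg (by positivity : (0:ℝ) ≤ (4*M)⁻¹), abs_zero, add_zero]
    rw [show (4:ℝ) * (4*M)⁻¹ * M = (4*M) * (4*M)⁻¹ from by ring,
      mul_inv_cancel₀ (by positivity : (4*M) ≠ 0)]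
  have hBH := hD w hw t ⟨ht0, ht1⟩ ψ ((contDiff_shp hK₀ hK₀ _ _).of_le (WithTop.coe_le_coe.2 le_top))
    (support_shp_subset hKts hKts _ _) hC2
  rw [abs_mul, abs_of_nonneg (by positivity : (0:ℝ) ≤ 4*M*t^(2:ℕ))]
  calc (4*M*t^(2:ℕ)) * |BHpair ζ w t ψ| ≤ (4*M*t^(2:ℕ)) * (D * t ^ α) :=
        mul_le_mul_of_nonneg_left hBH (by positivity)
    _ = 4 * M * D * t^(2:ℕ) * t ^ α := by ring

end S6

namespace S6

set_option maxHeartbeats 1000000 in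
lemma key2 {K₀ : ℝ × ℝ → ℝ} (hK₀ : ContDiff ℝ (⊤ : ℕ∞) K₀) (hKts : tsupport K₀ ⊆ pball 0 1)
    {M : ℝ} (hM1 : 1 ≤ M)
    (hP1b : ∀ p, |pd1 K₀ p| ≤ M) (hP2b : ∀ p, |pd2 K₀ p| ≤ M)
    (h21 : ∀ p, |pd2 (pd1 K₀) p| ≤ M) (h22 : ∀ p, |pd2 (pd2 K₀) p| ≤ M)
    (h221 : ∀ p, |pd2 (pd2 (pd1 K₀)) p| ≤ M) (h222 : ∀ p, |pd2 (pd2 (pd2 K₀)) p| ≤ M)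
    (h11 : ∀ p, |pd1 (pd1 K₀) p| ≤ M) (h12 : ∀ p, |pd1 (pd2 K₀) p| ≤ M)
    {α : ℝ} {ζ : ℝ × ℝ → ℝ} (hζc : Continuous ζ) (hζs : HasCompactSupport ζ)
    {S : Set (ℝ × ℝ)} {D : ℝ} (hD : IsBHBound α ζ S D) (hD0 : 0 ≤ D)
    {x y : ℝ × ℝ}
    (hseg : ∀ s : ℝ, s ∈ Set.Icc (0:ℝ) 1 →
      ((y.1 + s * (x.1 - y.1), y.2 + s * (x.2 - y.2)) : ℝ × ℝ) ∈ S)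
    (n : ℕ) (hlt : pnorm (x - y) ≤ ((2:ℝ)^n)⁻¹) (hl0 : 0 < pnorm (x - y)) :
    |(∫ z, ζ z * Kn K₀ n (x - z)) - ∫ z, ζ z * Kn K₀ n (y - z)|
      ≤ 8 * M * D * pnorm (x - y) * (((2:ℝ)^n)⁻¹) * (((2:ℝ)^n)⁻¹) ^ α := by
  have hK₀d : Differentiable ℝ K₀ := hK₀.differentiable (by simp)
  have hKc : Continuous K₀ := hK₀.continuous
  have hP1c : Continuous (pd1 K₀) := (contDiff_pd1 hK₀).continuous
  have hP2c : Continuous (pd2 K₀) := (contDiff_pd2 hK₀).continuous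
  have hts1 : tsupport (pd1 K₀) ⊆ pball 0 1 := (tsupport_pd1 hK₀d).trans hKts
  have hts2 : tsupport (pd2 K₀) ⊆ pball 0 1 := (tsupport_pd2 hK₀d).trans hKts
  set t : ℝ := ((2:ℝ)^n)⁻¹ with ht
  have ht0 : 0 < t := tn_pos n
  have ht1 : t ≤ 1 := tn_le_one n
  have h2n : ((2:ℝ)^n) ≠ 0 := (two_pow_pos n).ne'
  have hM0 : (0:ℝ) < M := lt_of_lt_of_le one_pos hM1
  set ℓ : ℝ := pnorm (x - y) with hℓ
  set a : ℝ := x.1 - y.1 with hadef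
  set b : ℝ := x.2 - y.2 with hbdef
  have ha : |a| ≤ ℓ^2 := by rw [hadef, hℓ]; exact abs_fst_le (x - y)
  have hb : |b| ≤ ℓ := by rw [hbdef, hℓ]; exact abs_snd_le (x - y)
  set H : ℝ → ℝ × ℝ → ℝ := fun s z =>
    (2:ℝ)^n * ((2:ℝ)^(2*n) * a *
        pd1 K₀ ((2:ℝ)^(2*n) * ((y.1 + s*a) - z.1), (2:ℝ)^n * ((y.2 + s*b) - z.2))
      + (2:ℝ)^n * b *
        pd2 K₀ ((2:ℝ)^(2*n) * ((y.1 + s*a) - z.1), (2:ℝ)^n * ((y.2 + s*b) - z.2)))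
    with hHdef
  -- continuity of H jointly
  have hA : Continuous (fun q : (ℝ × ℝ) × ℝ =>
      (((2:ℝ)^(2*n) * ((y.1 + q.2*a) - q.1.1), (2:ℝ)^n * ((y.2 + q.2*b) - q.1.2)) : ℝ × ℝ)) := by
    fun_prop
  have hHc : Continuous (fun q : (ℝ × ℝ) × ℝ => H q.2 q.1) := by
    rw [hHdef]
    exact continuous_const.mul
      ((continuous_const.mul (hP1c.comp hA)).add (continuous_const.mul (hP2c.comp hA)))
  have hHs : ∀ z, Continuous (fun s => H s z) := fun z =>
    hHc.comp (continuous_const.prodMk continuous_id)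
  -- pointwise derivative
  have hderiv : ∀ (z : ℝ × ℝ) (s : ℝ),
      HasDerivAt (fun s' => Kn K₀ n ((y.1 + s'*a, y.2 + s'*b) - z)) (H s z) s := by
    intro z s
    have h01 : HasDerivAt (fun s' : ℝ => (2:ℝ)^(2*n) * ((y.1 + s'*a) - z.1))
        ((2:ℝ)^(2*n) * a) s := by
      have h0 : HasDerivAt (fun s' : ℝ => (y.1 + s'*a) - z.1) a s := by
        simpa using (((hasDerivAt_id s).mul_const a).const_add y.1).sub_const z.1
      simpa using h0.const_mul ((2:ℝ)^(2*n))
    have h02 : HasDerivAt (fun s' : ℝ => (2:ℝ)^n * ((y.2 + s'*b) - z.2))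
        ((2:ℝ)^n * b) s := by
      have h0 : HasDerivAt (fun s' : ℝ => (y.2 + s'*b) - z.2) b s := by
        simpa using (((hasDerivAt_id s).mul_const b).const_add y.2).sub_const z.2
      simpa using h0.const_mul ((2:ℝ)^n)
    have hcc : HasDerivAt (fun s' : ℝ =>
        (((2:ℝ)^(2*n) * ((y.1 + s'*a) - z.1), (2:ℝ)^n * ((y.2 + s'*b) - z.2)) : ℝ × ℝ))
        (((2:ℝ)^(2*n) * a, (2:ℝ)^n * b) : ℝ × ℝ) s := h01.prodMk h02
    have ho := (hK₀d _).hasFDerivAt.comp_hasDerivAt s hcc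
    rw [fderiv_apply_eq hK₀d] at ho
    have hfin := ho.const_mul ((2:ℝ)^n)
    exact hfin
  -- FTC pointwise in z
  have hftc : ∀ z, Kn K₀ n (x - z) - Kn K₀ n (y - z) = ∫ s in (0:ℝ)..1, H s z := by
    intro z
    have hint : IntervalIntegrable (fun s => H s z) volume 0 1 :=
      (hHs z).intervalIntegrable 0 1
    have heq := intervalIntegral.integral_eq_sub_of_hasDerivAt
      (f := fun s' => Kn K₀ n ((y.1 + s'*a, y.2 + s'*b) - z)) (f' := fun s => H s z)
      (fun s _ => hderiv z s) hint
    rw [heq]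
    have e1 : ((y.1 + 1*a, y.2 + 1*b) : ℝ × ℝ) = x := by
      rw [hadef, hbdef]; exact Prod.ext (by ring) (by ring)
    have e0 : ((y.1 + 0*a, y.2 + 0*b) : ℝ × ℝ) = y := by
      exact Prod.ext (by ring) (by ring)
    show _ = Kn K₀ n ((y.1 + 1*a, y.2 + 1*b) - z) - Kn K₀ n ((y.1 + 0*a, y.2 + 0*b) - z)
    rw [e1, e0]
  -- integrability of each piece
  have hInt : ∀ w : ℝ × ℝ, Integrable (fun z => ζ z * Kn K₀ n (w - z)) := by
    intro w
    apply Continuous.integrable_of_hasCompactSupport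
    · have : Continuous (fun z : ℝ × ℝ => Kn K₀ n (w - z)) := by
        apply continuous_const.mul
        apply hKc.comp
        fun_prop
      exact hζc.mul this
    · exact hζs.mul_right
  have hdiff_eq : (∫ z, ζ z * Kn K₀ n (x - z)) - (∫ z, ζ z * Kn K₀ n (y - z))
      = ∫ z, ζ z * ∫ s in (0:ℝ)..1, H s z := by
    rw [← integral_sub (hInt x) (hInt y)]
    congr 1
    funext z
    rw [← mul_sub, hftc z]
  -- Fubini
  obtain ⟨Mζ, hMζ0, hMζ⟩ := exists_bound hζc hζs (subset_tsupport ζ)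
  set CB : ℝ := Mζ * ((2:ℝ)^n * ((2:ℝ)^(2*n) * |a| * M + (2:ℝ)^n * |b| * M)) with hCB
  have hHb : ∀ s z, |H s z| ≤ (2:ℝ)^n * ((2:ℝ)^(2*n) * |a| * M + (2:ℝ)^n * |b| * M) := by
    intro s z
    rw [hHdef]
    simp only
    rw [abs_mul, abs_of_nonneg (two_pow_pos n).le]
    apply mul_le_mul_of_nonneg_left _ (two_pow_pos n).le
    calc |(2:ℝ)^(2*n) * a * pd1 K₀ _ + (2:ℝ)^n * b * pd2 K₀ _|
        ≤ |(2:ℝ)^(2*n) * a * pd1 K₀ _| + |(2:ℝ)^n * b * pd2 K₀ _| := abs_add_le _ _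
      _ ≤ (2:ℝ)^(2*n) * |a| * M + (2:ℝ)^n * |b| * M := by
          rw [abs_mul, abs_mul, abs_mul, abs_mul,
            abs_of_nonneg (two_pow_pos (2*n)).le, abs_of_nonneg (two_pow_pos n).le]
          exact add_le_add
            (mul_le_mul_of_nonneg_left (hP1b _) (by positivity))
            (mul_le_mul_of_nonneg_left (hP2b _) (by positivity))
  haveI : IsFiniteMeasure (volume.restrict (Set.Ioc (0:ℝ) 1)) := ⟨by
    rw [Measure.restrict_apply_univ]; exact measure_Ioc_lt_top⟩
  have hInt2 : Integrable (Function.uncurry fun z s => ζ z * H s z)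
      ((volume : Measure (ℝ × ℝ)).prod (volume.restrict (Set.Ioc (0:ℝ) 1))) := by
    apply Integrable.mono'
      (g := fun q : (ℝ × ℝ) × ℝ => (tsupport ζ).indicator (fun _ => CB) q.1)
    · have h1 : Integrable ((tsupport ζ).indicator (fun _ => CB)) (volume : Measure (ℝ × ℝ)) :=
        (integrable_indicator_iff (isClosed_tsupport ζ).measurableSet).2
          ((integrableOn_const_iff).2 (Or.inr hζs.measure_lt_top))
      have h2 : Integrable (fun _ : ℝ => (1:ℝ)) (volume.restrict (Set.Ioc (0:ℝ) 1)) :=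
        integrable_const 1
      have := h1.mul_prod h2
      simpa using this
    · exact ((hζc.comp continuous_fst).mul hHc).aestronglyMeasurable
    · apply Filter.Eventually.of_forall
      intro q
      by_cases hq : q.1 ∈ tsupport ζ
      · rw [Set.indicator_of_mem hq]
        show |ζ q.1 * H q.2 q.1| ≤ CB
        rw [abs_mul, hCB]
        exact mul_le_mul (hMζ _) (hHb _ _) (abs_nonneg _) hMζ0
      · rw [Set.indicator_of_notMem hq]
        show |ζ q.1 * H q.2 q.1| ≤ 0
        rw [image_eq_zero_of_notMem_tsupport hq, zero_mul, abs_zero]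
  have hswap : ∫ z, ζ z * ∫ s in (0:ℝ)..1, H s z
      = ∫ s in (0:ℝ)..1, ∫ z, ζ z * H s z := by
    simp_rw [← intervalIntegral.integral_const_mul]
    rw [intervalIntegral.integral_of_le zero_le_one]
    simp_rw [intervalIntegral.integral_of_le zero_le_one]
    exact MeasureTheory.integral_integral_swap hInt2
  -- per-s bound
  set R : ℝ := 8*M*ℓ*t with hR
  have hR0 : 0 < R := by rw [hR]; positivity
  have hperS : ∀ s ∈ Set.uIoc (0:ℝ) 1, ‖∫ z, ζ z * H s z‖ ≤ R * (D * t ^ α) := by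
    intro s hs
    rw [Set.uIoc_of_le zero_le_one] at hs
    have hsIcc : s ∈ Set.Icc (0:ℝ) 1 := Set.Ioc_subset_Icc_self hs
    set w : ℝ × ℝ := ((y.1 + s*a, y.2 + s*b) : ℝ × ℝ) with hw
    have hwS : w ∈ S := hseg s hsIcc
    set ψ : ℝ × ℝ → ℝ := shp (pd1 K₀) (pd2 K₀) (a/R) (t*b/R) with hψ
    have hpt : ∀ u : ℝ × ℝ, t^(3:ℕ) * H s (w.1 + t^(2:ℕ)*u.1, w.2 + t*u.2) = R * ψ u := by
      intro u
      have a1 : (2:ℝ)^(2*n) * ((y.1 + s*a) - (w.1 + t^(2:ℕ)*u.1)) = -u.1 := by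
        show (2:ℝ)^(2*n) * ((y.1 + s*a) - ((y.1 + s*a) + t^(2:ℕ)*u.1)) = -u.1
        rw [mul_comm 2 n, pow_mul, ht]
        field_simp
        ring
      have a2 : (2:ℝ)^n * ((y.2 + s*b) - (w.2 + t*u.2)) = -u.2 := by
        show (2:ℝ)^n * ((y.2 + s*b) - ((y.2 + s*b) + t*u.2)) = -u.2
        rw [ht]; field_simp; ring
      show t^(3:ℕ) * ((2:ℝ)^n * ((2:ℝ)^(2*n) * a * pd1 K₀ (_, _)
          + (2:ℝ)^n * b * pd2 K₀ (_, _))) = R * ψ u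
      rw [a1, a2, hψ, shp]
      rw [ht]
      field_simp
      ring
    have hrepr := integral_eq_mul_BHpair ζ w ht0 (H s) ψ hpt
    have hgoal_eq : (∫ z, ζ z * H s z) = R * BHpair ζ w t ψ := hrepr
    rw [hgoal_eq]
    have hC2 : C2norm ψ ≤ 1 := by
      have h := C2norm_shp_le hM0.le (contDiff_pd1 hK₀) (contDiff_pd2 hK₀)
        hP1b hP2b h21 h22 h221 h222 h11 h12 (a/R) (t*b/R)
      apply h.trans
      rw [abs_div, abs_div, abs_of_nonneg hR0.le, abs_mul, abs_of_nonneg ht0.le]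
      have h1 : |a| ≤ ℓ * t := by nlinarith
      have h2 : t*|b| ≤ ℓ * t := by nlinarith
      calc 4*(|a|/R + t*|b|/R)*M = (4*M*(|a| + t*|b|))/R := by ring
        _ ≤ (4*M*(2*(ℓ*t)))/R := by gcongr; linarith
        _ = 1 := by rw [hR]; field_simp [hl0.ne', ht0.ne', hM0.ne']; ring
    have hBH := hD w hwS t ⟨ht0, ht1⟩ ψ
      ((contDiff_shp (contDiff_pd1 hK₀) (contDiff_pd2 hK₀) _ _).of_le (WithTop.coe_le_coe.2 le_top))
      (support_shp_subset hts1 hts2 _ _) hC2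
    rw [Real.norm_eq_abs, abs_mul, abs_of_nonneg hR0.le]
    exact mul_le_mul_of_nonneg_left hBH hR0.le
  -- assemble
  rw [hdiff_eq, hswap]
  have hfin := intervalIntegral.norm_integral_le_of_norm_le_const hperS
  rw [Real.norm_eq_abs] at hfin
  calc |∫ s in (0:ℝ)..1, ∫ z, ζ z * H s z| ≤ R * (D * t ^ α) * |1 - 0| := hfin
    _ = 8 * M * D * ℓ * t * t ^ α := by
        rw [hR]; rw [show |(1:ℝ) - 0| = 1 by norm_num]; ring

end S6

namespace S6

lemma lint_bound {K₀ : ℝ × ℝ → ℝ} (hKsupp : Function.support K₀ ⊆ pball 0 1)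
    {MK : ℝ} (hMK : ∀ p, |K₀ p| ≤ MK)
    {ζ : ℝ × ℝ → ℝ} {Mζ : ℝ} (hMζ : ∀ p, |ζ p| ≤ Mζ)
    (w : ℝ × ℝ) (n : ℕ) :
    ∫⁻ z, ‖ζ z * Kn K₀ n (w - z)‖₊
      ≤ ENNReal.ofReal ((Mζ * MK * 4) * ((4:ℝ)⁻¹)^n) := by
  have hMζ0 : 0 ≤ Mζ := (abs_nonneg _).trans (hMζ 0)
  have hMK0 : 0 ≤ MK := (abs_nonneg _).trans (hMK 0)
  set t : ℝ := ((2:ℝ)^n)⁻¹ with ht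
  have ht0 : 0 < t := tn_pos n
  have h2n : ((2:ℝ)^n) ≠ 0 := (two_pow_pos n).ne'
  set B : Set (ℝ × ℝ) := Set.Icc (w.1 - t^2) (w.1 + t^2) ×ˢ Set.Icc (w.2 - t) (w.2 + t) with hB
  have hBmeas : MeasurableSet B := measurableSet_Icc.prod measurableSet_Icc
  have ht2 : ((2:ℝ)^(2*n))⁻¹ = t^2 := by
    rw [ht, mul_comm 2 n, pow_mul, inv_pow]
  have hct : (2:ℝ)^(2*n) * t^2 = 1 := by
    rw [← ht2]; exact mul_inv_cancel₀ (two_pow_pos _).ne'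
  have hct1 : (2:ℝ)^n * t = 1 := mul_inv_cancel₀ h2n
  have hsupp0 : ∀ z, z ∉ B → ζ z * Kn K₀ n (w - z) = 0 := by
    intro z hz
    by_contra h
    apply hz
    have hKne : K₀ ((2:ℝ)^(2*n) * (w - z).1, (2:ℝ)^n * (w - z).2) ≠ 0 := by
      intro h0
      apply h
      rw [Kn, h0, mul_zero, mul_zero]
    have hmem := hKsupp hKne
    have hp : pnorm (((2:ℝ)^(2*n) * (w - z).1, (2:ℝ)^n * (w - z).2) - 0) ≤ 1 := hmem
    rw [sub_zero] at hp
    obtain ⟨hp1, hp2⟩ := mem_pball_of_bounds hp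
    simp only [abs_mul, Prod.fst_sub, Prod.snd_sub] at hp1 hp2
    rw [abs_of_nonneg (two_pow_pos (2*n)).le] at hp1
    rw [abs_of_nonneg (two_pow_pos n).le] at hp2
    have e1 : |w.1 - z.1| ≤ t^2 := by
      nlinarith [two_pow_pos (2*n), abs_nonneg (w.1 - z.1)]
    have e2 : |w.2 - z.2| ≤ t := by
      nlinarith [two_pow_pos n, abs_nonneg (w.2 - z.2)]
    rw [abs_le] at e1 e2
    exact ⟨⟨by linarith [e1.1, e1.2], by linarith [e1.1, e1.2]⟩,
      ⟨by linarith [e2.1, e2.2], by linarith [e2.1, e2.2]⟩⟩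
  have hptwise : ∀ z, (‖ζ z * Kn K₀ n (w - z)‖₊ : ENNReal)
      ≤ B.indicator (fun _ => ENNReal.ofReal (Mζ * ((2:ℝ)^n * MK))) z := by
    intro z
    by_cases hz : z ∈ B
    · rw [Set.indicator_of_mem hz, ← enorm_eq_nnnorm, ← ofReal_norm]
      apply ENNReal.ofReal_le_ofReal
      rw [Real.norm_eq_abs, abs_mul]
      have hKb : |Kn K₀ n (w - z)| ≤ (2:ℝ)^n * MK := by
        rw [Kn, abs_mul, abs_of_nonneg (two_pow_pos n).le]
        exact mul_le_mul_of_nonneg_left (hMK _) (two_pow_pos n).le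
      exact mul_le_mul (hMζ _) hKb (abs_nonneg _) hMζ0
    · rw [Set.indicator_of_notMem hz, hsupp0 z hz]
      simp
  calc ∫⁻ z, ‖ζ z * Kn K₀ n (w - z)‖₊
      ≤ ∫⁻ z, B.indicator (fun _ => ENNReal.ofReal (Mζ * ((2:ℝ)^n * MK))) z :=
        lintegral_mono hptwise
    _ = ENNReal.ofReal (Mζ * ((2:ℝ)^n * MK)) * volume B := by
        rw [lintegral_indicator hBmeas, setLIntegral_const]
    _ = ENNReal.ofReal (Mζ * ((2:ℝ)^n * MK)) * (ENNReal.ofReal (2*t^2) * ENNReal.ofReal (2*t)) := by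
        congr 1
        rw [hB, Measure.volume_eq_prod, Measure.prod_prod, Real.volume_Icc, Real.volume_Icc]
        congr 1 <;> ring
    _ = ENNReal.ofReal ((Mζ * MK * 4) * ((4:ℝ)⁻¹)^n) := by
        rw [← ENNReal.ofReal_mul (by positivity), ← ENNReal.ofReal_mul (by positivity)]
        congr 1
        have ht4 : t^2 = ((4:ℝ)⁻¹)^n := by
          rw [ht, inv_pow, inv_pow, ← pow_mul, mul_comm n 2, pow_mul]
          norm_num
        calc Mζ * ((2:ℝ)^n * MK) * (2*t^2 * (2*t))
            = 4*Mζ*MK*(((2:ℝ)^n * t)*t^2) := by ring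
          _ = 4*Mζ*MK*t^2 := by rw [hct1, one_mul]
          _ = (Mζ * MK * 4) * ((4:ℝ)⁻¹)^n := by rw [ht4]; ring

lemma convol_eq_tsum {K₀ : ℝ × ℝ → ℝ} (hKc : Continuous K₀)
    (hKsupp : Function.support K₀ ⊆ pball 0 1)
    {MK : ℝ} (hMK : ∀ p, |K₀ p| ≤ MK)
    {ζ : ℝ × ℝ → ℝ} (hζc : Continuous ζ) {Mζ : ℝ} (hMζ : ∀ p, |ζ p| ≤ Mζ)
    (w : ℝ × ℝ) :
    convol (Kfun K₀) ζ w = ∑' n, ∫ z, ζ z * Kn K₀ n (w - z) := by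
  have hmeas : ∀ n : ℕ, AEStronglyMeasurable (fun z => ζ z * Kn K₀ n (w - z))
      (volume : Measure (ℝ × ℝ)) := by
    intro n
    exact (hζc.mul (continuous_const.mul (hKc.comp (by fun_prop)))).aestronglyMeasurable
  have hlint : (∑' n : ℕ, ∫⁻ z, ‖ζ z * Kn K₀ n (w - z)‖₊) ≠ ⊤ := by
    have hMζ0 : 0 ≤ Mζ := (abs_nonneg _).trans (hMζ 0)
    have hMK0 : 0 ≤ MK := (abs_nonneg _).trans (hMK 0)
    apply ne_top_of_le_ne_top _ (ENNReal.tsum_le_tsum (fun n => lint_bound hKsupp hMK hMζ w n))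
    have he : ∀ n : ℕ, ENNReal.ofReal ((Mζ*MK*4) * ((4:ℝ)⁻¹)^n)
        = ENNReal.ofReal (Mζ*MK*4) * (ENNReal.ofReal ((4:ℝ)⁻¹))^n := by
      intro n
      rw [ENNReal.ofReal_mul (by positivity), ENNReal.ofReal_pow (by norm_num)]
    rw [tsum_congr he, ENNReal.tsum_mul_left, ENNReal.tsum_geometric]
    apply ENNReal.mul_ne_top ENNReal.ofReal_ne_top
    rw [ENNReal.inv_ne_top]
    have h1 : ENNReal.ofReal ((4:ℝ)⁻¹) < 1 := ENNReal.ofReal_lt_one.2 (by norm_num)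
    exact (tsub_pos_iff_lt.2 h1).ne'
  rw [convol]
  have hfun : (fun z => Kfun K₀ (w - z) * ζ z) = fun z => ∑' n, ζ z * Kn K₀ n (w - z) := by
    funext z
    rw [Kfun_apply, ← tsum_mul_right]
    exact tsum_congr (fun n => mul_comm _ _)
  rw [hfun]
  exact integral_tsum hmeas hlint

end S6


open S6 in
set_option maxHeartbeats 1000000 in
theorem stmt6 (α : ℝ) (hα : α ∈ Set.Ioo (-1:ℝ) 0)
    (K₀ : ℝ × ℝ → ℝ) (hK₀ : ContDiff ℝ (⊤ : ℕ∞) K₀)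
    (hKsupp : Function.support K₀ ⊆ pball 0 1)
    (𝔎 : Set (ℝ × ℝ)) (h𝔎 : IsCompact 𝔎) :
    ∃ C : ℝ, 0 < C ∧
      ∀ ζ : ℝ × ℝ → ℝ, Continuous ζ → HasCompactSupport ζ →
        ∀ D : ℝ, IsBHBound α ζ (rect 𝔎) D →
          ∀ x ∈ 𝔎, ∀ y ∈ 𝔎, pnorm (x - y) ≤ 1 →
            |convol (Kfun K₀) ζ x - convol (Kfun K₀) ζ y|
              ≤ C * pnorm (x - y) * D := by
  obtain ⟨hα1, hα2⟩ := hα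
  have hKd : Differentiable ℝ K₀ := hK₀.differentiable (by simp)
  have cP1 : ContDiff ℝ (⊤ : ℕ∞) (pd1 K₀) := contDiff_pd1 hK₀
  have cP2 : ContDiff ℝ (⊤ : ℕ∞) (pd2 K₀) := contDiff_pd2 hK₀
  have cP21 : ContDiff ℝ (⊤ : ℕ∞) (pd2 (pd1 K₀)) := contDiff_pd2 cP1
  have cP22 : ContDiff ℝ (⊤ : ℕ∞) (pd2 (pd2 K₀)) := contDiff_pd2 cP2
  have cP221 : ContDiff ℝ (⊤ : ℕ∞) (pd2 (pd2 (pd1 K₀))) := contDiff_pd2 cP21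
  have cP222 : ContDiff ℝ (⊤ : ℕ∞) (pd2 (pd2 (pd2 K₀))) := contDiff_pd2 cP22
  have cP11 : ContDiff ℝ (⊤ : ℕ∞) (pd1 (pd1 K₀)) := contDiff_pd1 cP1
  have cP12 : ContDiff ℝ (⊤ : ℕ∞) (pd1 (pd2 K₀)) := contDiff_pd1 cP2
  have ts0 : tsupport K₀ ⊆ pball 0 1 := closure_minimal hKsupp (isClosed_pball 0 1)
  have ts1 : tsupport (pd1 K₀) ⊆ pball 0 1 := (tsupport_pd1 hKd).trans ts0
  have ts2 : tsupport (pd2 K₀) ⊆ pball 0 1 := (tsupport_pd2 hKd).trans ts0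
  have ts21 : tsupport (pd2 (pd1 K₀)) ⊆ pball 0 1 :=
    (tsupport_pd2 (cP1.differentiable (by simp))).trans ts1
  have ts22 : tsupport (pd2 (pd2 K₀)) ⊆ pball 0 1 :=
    (tsupport_pd2 (cP2.differentiable (by simp))).trans ts2
  have ts221 : tsupport (pd2 (pd2 (pd1 K₀))) ⊆ pball 0 1 :=
    (tsupport_pd2 (cP21.differentiable (by simp))).trans ts21
  have ts222 : tsupport (pd2 (pd2 (pd2 K₀))) ⊆ pball 0 1 :=
    (tsupport_pd2 (cP22.differentiable (by simp))).trans ts22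
  have ts11 : tsupport (pd1 (pd1 K₀)) ⊆ pball 0 1 :=
    (tsupport_pd1 (cP1.differentiable (by simp))).trans ts1
  have ts12 : tsupport (pd1 (pd2 K₀)) ⊆ pball 0 1 :=
    (tsupport_pd1 (cP2.differentiable (by simp))).trans ts2
  obtain ⟨M0, hM00, hM0b⟩ := exists_bound hK₀.continuous isCompact_pball
    ((subset_tsupport _).trans ts0)
  obtain ⟨M1, hM10, hM1b⟩ := exists_bound cP1.continuous isCompact_pball
    ((subset_tsupport _).trans ts1)
  obtain ⟨M2, hM20, hM2b⟩ := exists_bound cP2.continuous isCompact_pball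
    ((subset_tsupport _).trans ts2)
  obtain ⟨M3, hM30, hM3b⟩ := exists_bound cP21.continuous isCompact_pball
    ((subset_tsupport _).trans ts21)
  obtain ⟨M4, hM40, hM4b⟩ := exists_bound cP22.continuous isCompact_pball
    ((subset_tsupport _).trans ts22)
  obtain ⟨M5, hM50, hM5b⟩ := exists_bound cP221.continuous isCompact_pball
    ((subset_tsupport _).trans ts221)
  obtain ⟨M6, hM60, hM6b⟩ := exists_bound cP222.continuous isCompact_pball
    ((subset_tsupport _).trans ts222)
  obtain ⟨M7, hM70, hM7b⟩ := exists_bound cP11.continuous isCompact_pball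
    ((subset_tsupport _).trans ts11)
  obtain ⟨M8, hM80, hM8b⟩ := exists_bound cP12.continuous isCompact_pball
    ((subset_tsupport _).trans ts12)
  set M : ℝ := 1 + (M0 + M1 + M2 + M3 + M4 + M5 + M6 + M7 + M8) with hMdef
  have hM1 : 1 ≤ M := by rw [hMdef]; linarith
  have hM0 : (0:ℝ) < M := lt_of_lt_of_le one_pos hM1
  have bK : ∀ p, |K₀ p| ≤ M := fun p => (hM0b p).trans (by rw [hMdef]; linarith)
  have b1 : ∀ p, |pd1 K₀ p| ≤ M := fun p => (hM1b p).trans (by rw [hMdef]; linarith)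
  have b2 : ∀ p, |pd2 K₀ p| ≤ M := fun p => (hM2b p).trans (by rw [hMdef]; linarith)
  have b21 : ∀ p, |pd2 (pd1 K₀) p| ≤ M := fun p => (hM3b p).trans (by rw [hMdef]; linarith)
  have b22 : ∀ p, |pd2 (pd2 K₀) p| ≤ M := fun p => (hM4b p).trans (by rw [hMdef]; linarith)
  have b221 : ∀ p, |pd2 (pd2 (pd1 K₀)) p| ≤ M := fun p => (hM5b p).trans (by rw [hMdef]; linarith)
  have b222 : ∀ p, |pd2 (pd2 (pd2 K₀)) p| ≤ M := fun p => (hM6b p).trans (by rw [hMdef]; linarith)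
  have b11 : ∀ p, |pd1 (pd1 K₀) p| ≤ M := fun p => (hM7b p).trans (by rw [hMdef]; linarith)
  have b12 : ∀ p, |pd1 (pd2 K₀) p| ≤ M := fun p => (hM8b p).trans (by rw [hMdef]; linarith)
  -- geometric ratio
  set ρ : ℝ := (2:ℝ) ^ (-(1+α)) with hρdef
  have hρ0 : 0 < ρ := Real.rpow_pos_of_pos two_pos _
  have hρ1 : ρ < 1 := Real.rpow_lt_one_of_one_lt_of_neg one_lt_two (by linarith)
  have h1ρ : 0 < 1 - ρ := by linarith
  refine ⟨8 * M * (1 - ρ)⁻¹, by positivity, ?_⟩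
  intro ζ hζc hζs D hD x hx y hy hxy
  -- membership in rect
  have hrectmem : ∀ w ∈ 𝔎, w ∈ rect 𝔎 := by
    intro w hw
    refine ⟨⟨?_, ?_⟩, ?_, ?_⟩
    · exact csInf_le (h𝔎.image continuous_fst).bddBelow ⟨w, hw, rfl⟩
    · exact le_csSup (h𝔎.image continuous_fst).bddAbove ⟨w, hw, rfl⟩
    · exact csInf_le (h𝔎.image continuous_snd).bddBelow ⟨w, hw, rfl⟩
    · exact le_csSup (h𝔎.image continuous_snd).bddAbove ⟨w, hw, rfl⟩
  have hxr := hrectmem x hx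
  have hyr := hrectmem y hy
  have hD0 : 0 ≤ D := bh_nonneg hD hxr
  have hseg : ∀ s : ℝ, s ∈ Set.Icc (0:ℝ) 1 →
      ((y.1 + s*(x.1 - y.1), y.2 + s*(x.2 - y.2)) : ℝ × ℝ) ∈ rect 𝔎 := by
    intro s hs
    have hconv : Convex ℝ (rect 𝔎) := (convex_Icc _ _).prod (convex_Icc _ _)
    have hmem := hconv hxr hyr hs.1 (by linarith [hs.2] : (0:ℝ) ≤ 1 - s)
      (by ring : s + (1 - s) = 1)
    have hpt : ((y.1 + s*(x.1 - y.1), y.2 + s*(x.2 - y.2)) : ℝ × ℝ) = s • x + (1 - s) • y := by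
      apply Prod.ext
      · show y.1 + s*(x.1 - y.1) = (s • x + (1 - s) • y).1
        simp [smul_eq_mul]
        ring
      · show y.2 + s*(x.2 - y.2) = (s • x + (1 - s) • y).2
        simp [smul_eq_mul]
        ring
    rw [hpt]
    exact hmem
  set ℓ : ℝ := pnorm (x - y) with hℓ
  by_cases hl0 : ℓ = 0
  · have hxy0 : x = y := eq_of_pnorm_sub_eq_zero hl0
    rw [hxy0, sub_self, abs_zero, hl0]
    simp
  have hl0' : 0 < ℓ := lt_of_le_of_ne (pnorm_nonneg _) (Ne.symm hl0)
  -- power identity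
  have hpow : ∀ n : ℕ, ((2:ℝ)^n)⁻¹ * (((2:ℝ)^n)⁻¹) ^ α = ρ ^ n := by
    intro n
    have h2 : ((2:ℝ)^n)⁻¹ = (2:ℝ) ^ (-(n:ℝ)) := by
      rw [← Real.rpow_natCast 2 n, ← Real.rpow_neg (by norm_num)]
    rw [h2, ← Real.rpow_natCast ρ n, hρdef,
      ← Real.rpow_mul (by norm_num : (0:ℝ) ≤ 2),
      ← Real.rpow_mul (by norm_num : (0:ℝ) ≤ 2),
      ← Real.rpow_add (by norm_num : (0:ℝ) < 2)]
    congr 1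
    ring
  -- per-n bound
  have key : ∀ n : ℕ, |(∫ z, ζ z * Kn K₀ n (x - z)) - ∫ z, ζ z * Kn K₀ n (y - z)|
      ≤ (8*M*D*ℓ) * ρ^n := by
    intro n
    by_cases hc : ℓ ≤ ((2:ℝ)^n)⁻¹
    · have h := key2 hK₀ ts0 hM1 b1 b2 b21 b22 b221 b222 b11 b12 hζc hζs hD hD0
        hseg n hc hl0'
      apply h.trans
      rw [show (8:ℝ)*M*D*ℓ*((2:ℝ)^n)⁻¹*(((2:ℝ)^n)⁻¹)^α
          = (8*M*D*ℓ) * (((2:ℝ)^n)⁻¹ * (((2:ℝ)^n)⁻¹)^α) from by ring, hpow n]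
    · push_neg at hc
      have h1 := key1 hK₀ ts0 hM1 bK b2 b22 b1 hD hD0 n hxr
      have h2 := key1 hK₀ ts0 hM1 bK b2 b22 b1 hD hD0 n hyr
      have habs : |(∫ z, ζ z * Kn K₀ n (x - z)) - ∫ z, ζ z * Kn K₀ n (y - z)|
          ≤ |∫ z, ζ z * Kn K₀ n (x - z)| + |∫ z, ζ z * Kn K₀ n (y - z)| := by
        rw [sub_eq_add_neg]
        exact (abs_add_le _ _).trans (by rw [abs_neg])
      have hX : (((2:ℝ)^n)⁻¹)^(2:ℕ) * (((2:ℝ)^n)⁻¹) ^ α = ((2:ℝ)^n)⁻¹ * ρ^n := by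
        rw [← hpow n]; ring
      have h1' : |∫ z, ζ z * Kn K₀ n (x - z)| ≤ 4*M*D*(((2:ℝ)^n)⁻¹ * ρ^n) := by
        apply h1.trans
        rw [show (4:ℝ)*M*D*(((2:ℝ)^n)⁻¹)^(2:ℕ)*(((2:ℝ)^n)⁻¹)^α
          = 4*M*D*((((2:ℝ)^n)⁻¹)^(2:ℕ) * (((2:ℝ)^n)⁻¹)^α) from by ring, hX]
      have h2' : |∫ z, ζ z * Kn K₀ n (y - z)| ≤ 4*M*D*(((2:ℝ)^n)⁻¹ * ρ^n) := by
        apply h2.trans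
        rw [show (4:ℝ)*M*D*(((2:ℝ)^n)⁻¹)^(2:ℕ)*(((2:ℝ)^n)⁻¹)^α
          = 4*M*D*((((2:ℝ)^n)⁻¹)^(2:ℕ) * (((2:ℝ)^n)⁻¹)^α) from by ring, hX]
      have hfac : 0 ≤ M*D*ρ^n := by positivity
      have hkey : 0 ≤ M*D*ρ^n * (ℓ - ((2:ℝ)^n)⁻¹) :=
        mul_nonneg hfac (sub_nonneg.2 hc.le)
      calc |(∫ z, ζ z * Kn K₀ n (x - z)) - ∫ z, ζ z * Kn K₀ n (y - z)|
          ≤ |∫ z, ζ z * Kn K₀ n (x - z)| + |∫ z, ζ z * Kn K₀ n (y - z)| := habs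
        _ ≤ 4*M*D*(((2:ℝ)^n)⁻¹ * ρ^n) + 4*M*D*(((2:ℝ)^n)⁻¹ * ρ^n) := add_le_add h1' h2'
        _ ≤ (8*M*D*ℓ) * ρ^n := by nlinarith [hkey]
  -- summability and conclusion
  obtain ⟨Mζ, hMζ0, hMζ⟩ := exists_bound hζc hζs (subset_tsupport ζ)
  have hsum_geom : Summable (fun n : ℕ => (8*M*D*ℓ) * ρ^n) :=
    (summable_geometric_of_lt_one hρ0.le hρ1).mul_left _
  have hsum_geom4 : Summable (fun n : ℕ => (4*M*D) * ρ^n) :=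
    (summable_geometric_of_lt_one hρ0.le hρ1).mul_left _
  have hIsum : ∀ w ∈ rect 𝔎, Summable (fun n => ∫ z, ζ z * Kn K₀ n (w - z)) := by
    intro w hw
    apply Summable.of_norm_bounded hsum_geom4
    intro n
    rw [Real.norm_eq_abs]
    have h := key1 hK₀ ts0 hM1 bK b2 b22 b1 hD hD0 n hw
    apply h.trans
    have hX : (((2:ℝ)^n)⁻¹)^(2:ℕ) * (((2:ℝ)^n)⁻¹) ^ α = ((2:ℝ)^n)⁻¹ * ρ^n := by
      rw [← hpow n]; ring
    rw [show (4:ℝ)*M*D*(((2:ℝ)^n)⁻¹)^(2:ℕ)*(((2:ℝ)^n)⁻¹)^α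
        = 4*M*D*((((2:ℝ)^n)⁻¹)^(2:ℕ) * (((2:ℝ)^n)⁻¹)^α) from by ring, hX]
    have ht1 : ((2:ℝ)^n)⁻¹ ≤ 1 := tn_le_one n
    have hnn : (0:ℝ) ≤ M*D*ρ^n := by positivity
    have hh := mul_nonneg hnn (sub_nonneg.2 ht1)
    nlinarith [hh]
  have hsummand : Summable
      (fun n => (∫ z, ζ z * Kn K₀ n (x - z)) - ∫ z, ζ z * Kn K₀ n (y - z)) := by
    apply Summable.of_norm_bounded hsum_geom
    intro n
    rw [Real.norm_eq_abs]
    exact key n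
  have hnorms : Summable
      (fun n => ‖(∫ z, ζ z * Kn K₀ n (x - z)) - ∫ z, ζ z * Kn K₀ n (y - z)‖) := by
    apply Summable.of_nonneg_of_le (fun n => norm_nonneg _) _ hsum_geom
    intro n
    rw [Real.norm_eq_abs]
    exact key n
  rw [convol_eq_tsum hK₀.continuous hKsupp bK hζc hMζ x,
    convol_eq_tsum hK₀.continuous hKsupp bK hζc hMζ y,
    ← Summable.tsum_sub (hIsum x hxr) (hIsum y hyr)]
  calc |∑' n, ((∫ z, ζ z * Kn K₀ n (x - z)) - ∫ z, ζ z * Kn K₀ n (y - z))|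
      ≤ ∑' n, ‖(∫ z, ζ z * Kn K₀ n (x - z)) - ∫ z, ζ z * Kn K₀ n (y - z)‖ := by
        rw [← Real.norm_eq_abs]
        exact norm_tsum_le_tsum_norm hnorms
    _ ≤ ∑' n : ℕ, (8*M*D*ℓ) * ρ^n := by
        apply Summable.tsum_le_tsum _ hnorms hsum_geom
        intro n
        rw [Real.norm_eq_abs]
        exact key n
    _ = (8*M*D*ℓ) * (1-ρ)⁻¹ := by
        rw [tsum_mul_left, tsum_geometric_of_lt_one hρ0.le hρ1]
    _ = 8 * M * (1 - ρ)⁻¹ * ℓ * D := by ring
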